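/- For every real s with −2 < s < 2 and s ≠ 0, one has ∫_ℝ e^{−s y} ( 2 sech²(y) − 6 sech⁴(y) ) dy = π s (s² − 2) / sin(π s / 2). -/

import Mathlib

/-!
The substitution `t = (1 + tanh y) / 2` maps `ℝ` onto `(0, 1)` with `dt = sech² y / 2 dy`,
`t = eʸ sech y / 2` and `1 - t = e⁻ʸ sech y / 2`. It therefore turns the Laplace transform
`∫ e^{-sy} sech^c y dy` into `2^{c-1}` times the Euler Beta integral `B((c - s)/2, (c + s)/2)`.
For `c = 2` and `c = 4` the functional equation of `Γ` reduces both Gamma products to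
`Γ(1 + s/2) Γ(1 - s/2)`, which the reflection formula evaluates as `(π s / 2) / sin (π s / 2)`.
-/

open MeasureTheory Real

noncomputable def sech (x : ℝ) : ℝ := (Real.cosh x)⁻¹

open Set

lemma ofReal_rpow_mul_one_sub_rpow {a b t : ℝ} (ht : t ∈ Icc 0 1) :
    ((t ^ (a - 1) * (1 - t) ^ (b - 1) : ℝ) : ℂ)
      = (t : ℂ) ^ (a - 1 : ℂ) * (1 - t : ℂ) ^ (b - 1 : ℂ) := by
  rw [Complex.ofReal_mul, Complex.ofReal_cpow ht.1, Complex.ofReal_cpow (sub_nonneg.2 ht.2)]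
  push_cast
  rfl

lemma integrableOn_rpow_mul_one_sub_rpow {a b : ℝ} (ha : 0 < a) (hb : 0 < b) :
    IntegrableOn (fun t : ℝ ↦ t ^ (a - 1) * (1 - t) ^ (b - 1)) (Ioo 0 1) := by
  have h := Complex.betaIntegral_convergent (u := a) (v := b) (by simpa) (by simpa)
  rw [intervalIntegrable_iff_integrableOn_Ioc_of_le zero_le_one] at h
  refine IntegrableOn.congr_fun (h.mono_set Ioo_subset_Ioc_self).re (fun t ht ↦ ?_)
    measurableSet_Ioo
  simp only [← ofReal_rpow_mul_one_sub_rpow (Ioo_subset_Icc_self ht), RCLike.re_to_complex,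
    Complex.ofReal_re]

lemma integral_rpow_mul_one_sub_rpow {a b : ℝ} (ha : 0 < a) (hb : 0 < b) :
    ∫ t in Ioo 0 1, t ^ (a - 1) * (1 - t) ^ (b - 1) = Gamma a * Gamma b / Gamma (a + b) := by
  apply Complex.ofReal_injective
  rw [← integral_complex_ofReal, setIntegral_congr_fun measurableSet_Ioo
    (fun t ht ↦ ofReal_rpow_mul_one_sub_rpow (a := a) (b := b) (Ioo_subset_Icc_self ht)),
    ← integral_Ioc_eq_integral_Ioo,
    ← intervalIntegral.integral_of_le zero_le_one, ← Complex.betaIntegral,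
    Complex.betaIntegral_eq_Gamma_mul_div _ _ (by simpa) (by simpa)]
  push_cast [← Complex.Gamma_ofReal]
  rfl

lemma sech_pos (x : ℝ) : 0 < sech x := inv_pos.2 (cosh_pos x)

lemma hasDerivAt_tanh (x : ℝ) : HasDerivAt tanh (sech x ^ 2) x := by
  have h := (hasDerivAt_sinh x).div (hasDerivAt_cosh x) (cosh_pos x).ne'
  rw [show tanh = sinh / cosh from funext tanh_eq_sinh_div_cosh]
  refine h.congr_deriv ?_
  rw [sech, inv_pow, ← one_div, ← cosh_sq_sub_sinh_sq x]
  ring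

lemma one_add_tanh (x : ℝ) : 1 + tanh x = exp x * sech x := by
  rw [tanh_eq_sinh_div_cosh, sech, ← cosh_add_sinh]; field_simp [(cosh_pos x).ne']

lemma one_sub_tanh (x : ℝ) : 1 - tanh x = exp (-x) * sech x := by
  rw [tanh_eq_sinh_div_cosh, sech, ← cosh_sub_sinh]; field_simp [(cosh_pos x).ne']

lemma image_one_add_tanh_div_two : (fun x ↦ (1 + tanh x) / 2) '' univ = Ioo 0 1 := by
  ext t
  simp only [image_univ, mem_range, mem_Ioo]
  constructor
  · rintro ⟨x, rfl⟩
    constructor <;> linarith [neg_one_lt_tanh x, tanh_lt_one x]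
  · rintro ⟨h0, h1⟩
    refine ⟨artanh (2 * t - 1), ?_⟩
    rw [tanh_artanh ⟨by linarith, by linarith⟩]
    ring

lemma injective_one_add_tanh_div_two : Function.Injective fun x ↦ (1 + tanh x) / 2 :=
  fun x y h ↦ tanh_injective (by linarith [show (1 + tanh x) / 2 = (1 + tanh y) / 2 from h])

lemma hasDerivAt_one_add_tanh_div_two (x : ℝ) :
    HasDerivAt (fun x ↦ (1 + tanh x) / 2) (sech x ^ 2 / 2) x :=
  ((hasDerivAt_tanh x).const_add 1).div_const 2

section TanhSubstitution

variable {E : Type*} [NormedAddCommGroup E] [NormedSpace ℝ E]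

lemma integrableOn_Ioo_zero_one_iff_integrable_tanh (g : ℝ → E) :
    IntegrableOn g (Ioo 0 1) ↔
      Integrable fun x ↦ (sech x ^ 2 / 2) • g ((1 + tanh x) / 2) := by
  rw [← image_one_add_tanh_div_two, integrableOn_image_iff_integrableOn_abs_deriv_smul
    MeasurableSet.univ (fun x _ ↦ (hasDerivAt_one_add_tanh_div_two x).hasDerivWithinAt)
    injective_one_add_tanh_div_two.injOn, integrableOn_univ]
  simp only [abs_of_nonneg (by positivity : (0 : ℝ) ≤ sech _ ^ 2 / 2)]

lemma integral_Ioo_zero_one_eq_integral_tanh (g : ℝ → E) :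
    ∫ t in Ioo 0 1, g t = ∫ x, (sech x ^ 2 / 2) • g ((1 + tanh x) / 2) := by
  rw [← image_one_add_tanh_div_two, integral_image_eq_integral_abs_deriv_smul
    MeasurableSet.univ (fun x _ ↦ (hasDerivAt_one_add_tanh_div_two x).hasDerivWithinAt)
    injective_one_add_tanh_div_two.injOn, Measure.restrict_univ]
  simp only [abs_of_nonneg (by positivity : (0 : ℝ) ≤ sech _ ^ 2 / 2)]

end TanhSubstitution

lemma sech_sq_div_two_mul_rpow_mul_one_sub_rpow (a b x : ℝ) :
    sech x ^ 2 / 2 * (((1 + tanh x) / 2) ^ (a - 1) * (1 - (1 + tanh x) / 2) ^ (b - 1))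
      = 2 ^ (1 - (a + b)) * (exp ((a - b) * x) * sech x ^ (a + b)) := by
  have hp : (1 + tanh x) / 2 = exp x * sech x / 2 := by rw [one_add_tanh]
  have hq : 1 - (1 + tanh x) / 2 = exp (-x) * sech x / 2 := by
    rw [← one_sub_tanh]; ring
  have hpq : sech x ^ 2 / 2 = 2 * (exp x * sech x / 2) * (exp (-x) * sech x / 2) := by
    rw [exp_neg]; field_simp
  have := sech_pos x
  rw [hq, hp, hpq, rpow_sub_one (by positivity), rpow_sub_one (by positivity),
    div_rpow (by positivity) zero_le_two, div_rpow (by positivity) zero_le_two,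
    mul_rpow (by positivity) this.le, mul_rpow (by positivity) this.le,
    ← exp_mul, ← exp_mul, rpow_add this, rpow_sub two_pos, rpow_add two_pos, rpow_one,
    show (a - b) * x = x * a + -x * b by ring, exp_add]
  field_simp

section SechTransform

variable {s c : ℝ}

theorem integrable_exp_mul_sech_rpow (h : |s| < c) :
    Integrable fun x ↦ exp (-s * x) * sech x ^ c := by
  obtain ⟨hs₁, hs₂⟩ := abs_lt.1 h
  have := (integrableOn_Ioo_zero_one_iff_integrable_tanh _).1
    (integrableOn_rpow_mul_one_sub_rpow (a := (c - s) / 2) (b := (c + s) / 2)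
      (by linarith) (by linarith))
  simp only [smul_eq_mul, sech_sq_div_two_mul_rpow_mul_one_sub_rpow,
    show (c - s) / 2 - (c + s) / 2 = -s by ring, show (c - s) / 2 + (c + s) / 2 = c by ring] at this
  exact (integrable_const_mul_iff (IsUnit.mk0 _ (by positivity)) _).1 this

theorem integral_exp_mul_sech_rpow (h : |s| < c) :
    ∫ x, exp (-s * x) * sech x ^ c
      = 2 ^ (c - 1) * (Gamma ((c - s) / 2) * Gamma ((c + s) / 2)) / Gamma c := by
  obtain ⟨hs₁, hs₂⟩ := abs_lt.1 h
  have := integral_rpow_mul_one_sub_rpow (a := (c - s) / 2) (b := (c + s) / 2)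
    (by linarith) (by linarith)
  simp only [integral_Ioo_zero_one_eq_integral_tanh, smul_eq_mul,
    sech_sq_div_two_mul_rpow_mul_one_sub_rpow, integral_const_mul,
    show (c - s) / 2 - (c + s) / 2 = -s by ring, show (c - s) / 2 + (c + s) / 2 = c by ring] at this
  rw [mul_div_assoc, ← this, ← mul_assoc, ← rpow_add two_pos]
  norm_num

end SechTransform

lemma Gamma_one_add_mul_Gamma_one_sub {x : ℝ} (hx : x ≠ 0) :
    Gamma (1 + x) * Gamma (1 - x) = π * x / sin (π * x) := by
  rw [add_comm, Gamma_add_one hx, mul_assoc, Gamma_mul_Gamma_one_sub]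
  ring

/-- Explicit bilateral Laplace transform of `2 sech² − 6 sech⁴` from the proof of
Lemma 1.4: for `−2 < s < 2`, `s ≠ 0`,
`∫ e^{−sy} (2 sech²(y) − 6 sech⁴(y)) dy = π s (s² − 2)/sin(π s/2)`. -/
theorem laplace_transform_cubic_NLS_formula :
    ∀ s : ℝ, -2 < s → s < 2 → s ≠ 0 →
      (∫ y : ℝ, Real.exp (-s * y) * (2 * sech y ^ 2 - 6 * sech y ^ 4))
        = π * s * (s ^ 2 - 2) / Real.sin (π * s / 2) := by
  intro s hs₁ hs₂ hs₀
  have h₂ : |s| < 2 := abs_lt.2 ⟨hs₁, hs₂⟩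
  have h₄ : |s| < 4 := by linarith
  have hsplit : (fun y ↦ exp (-s * y) * (2 * sech y ^ 2 - 6 * sech y ^ 4))
      = fun y ↦ 2 * (exp (-s * y) * sech y ^ (2 : ℝ))
          - 6 * (exp (-s * y) * sech y ^ (4 : ℝ)) := by
    ext y
    rw [rpow_ofNat, rpow_ofNat]
    ring
  have hΓ₂ : Gamma ((2 - s) / 2) * Gamma ((2 + s) / 2) = π * (s / 2) / sin (π * s / 2) := by
    rw [mul_comm, show (2 + s) / 2 = 1 + s / 2 by ring, show (2 - s) / 2 = 1 - s / 2 by ring,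
      Gamma_one_add_mul_Gamma_one_sub (div_ne_zero hs₀ two_ne_zero), mul_div_assoc']
  have hΓ₄ : Gamma ((4 - s) / 2) * Gamma ((4 + s) / 2)
      = (1 - s / 2) * (1 + s / 2) * (Gamma ((2 - s) / 2) * Gamma ((2 + s) / 2)) := by
    rw [show (4 - s) / 2 = (2 - s) / 2 + 1 by ring, show (4 + s) / 2 = (2 + s) / 2 + 1 by ring,
      Gamma_add_one (by linarith), Gamma_add_one (by linarith)]
    ring
  rw [hsplit, integral_sub ((integrable_exp_mul_sech_rpow h₂).const_mul 2)
      ((integrable_exp_mul_sech_rpow h₄).const_mul 6), integral_const_mul, integral_const_mul,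
    integral_exp_mul_sech_rpow h₂, integral_exp_mul_sech_rpow h₄, hΓ₄, hΓ₂]
  norm_num [Nat.factorial]
  ring
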